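/- Every finite simple undirected connected graph G has a spanning tree T such that PPN(T) = PPN(G). -/

import Mathlib

open SimpleGraph

variable {V : Type*}

/-- A list of vertices forming a path in `G`: nonempty, with distinct vertices,
and consecutive vertices adjacent. -/
def IsPathList (G : SimpleGraph V) (l : List V) : Prop :=
  l ≠ [] ∧ l.Nodup ∧ l.Chain' G.Adj

/-- A path partition of `G`: a list of pairwise vertex-disjoint paths covering
every vertex exactly once. -/
def IsPathPartition (G : SimpleGraph V) (L : List (List V)) : Prop :=
  (∀ l ∈ L, IsPathList G l) ∧ L.flatten.Nodup ∧ ∀ v : V, v ∈ L.flatten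

/-- The path partition number of `G`: the minimum number of paths in a path
partition of `G`. -/
noncomputable def ppn (G : SimpleGraph V) : ℕ :=
  sInf {k | ∃ L : List (List V), IsPathPartition G L ∧ L.length = k}

/-- A graph is Hamiltonian iff it contains a Hamiltonian cycle. -/
def IsHamiltonianGraph [DecidableEq V] (G : SimpleGraph V) : Prop :=
  ∃ (v : V) (p : G.Walk v v), p.IsHamiltonianCycle

/-- The Hamiltonian completion number of `G`: the minimum number of new edges
(between distinct vertices, not already present in `G`) whose addition makes
`G` Hamiltonian. -/
noncomputable def hcn [DecidableEq V] (G : SimpleGraph V) : ℕ :=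
  sInf {k | ∃ E' : Finset (Sym2 V), E'.card = k ∧
    (∀ e ∈ E', ¬ e.IsDiag ∧ e ∉ G.edgeSet) ∧
    IsHamiltonianGraph (G ⊔ SimpleGraph.fromEdgeSet ↑E')}

/-! Take a path partition `L` of `G` with `ppn G` paths. The edges of these paths form a linear
forest in `G`, which extends to a spanning tree `T ≤ G`; `L` is still a path partition of `T`,
so `ppn T ≤ ppn G`, while `ppn G ≤ ppn T` because every path of `T` is a path of `G`. -/

namespace SimpleGraph

def chainGraph : List V → SimpleGraph V
  | a :: b :: l => edge a b ⊔ chainGraph (b :: l)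
  | _ => ⊥

def pathForest : List (List V) → SimpleGraph V
  | [] => ⊥
  | l :: L => chainGraph l ⊔ pathForest L

lemma support_chainGraph_subset : ∀ l : List V, (chainGraph l).support ⊆ {v | v ∈ l}
  | [] | [_] => by simp [chainGraph]
  | a :: b :: l => by
    intro v hv
    obtain ⟨w, hw⟩ := (mem_support _).mp hv
    rcases hw with hw | hw
    · rcases ((edge_adj _ _ _ _).mp hw).1 with ⟨rfl, -⟩ | ⟨rfl, -⟩ <;> simp
    · exact List.mem_cons_of_mem a (support_chainGraph_subset (b :: l) ⟨w, hw⟩)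

lemma chainGraph_le {G : SimpleGraph V} : ∀ {l : List V}, l.IsChain G.Adj → chainGraph l ≤ G
  | [], _ | [_], _ => bot_le
  | _ :: _ :: _, h => by
    rw [List.isChain_cons_cons] at h
    exact sup_le ((edge_le_iff G).mpr (.inr h.1)) (chainGraph_le h.2)

lemma isChain_chainGraph : ∀ {l : List V}, l.Nodup → l.IsChain (chainGraph l).Adj
  | [], _ | [_], _ => by simp
  | a :: b :: l, h => by
    rw [List.isChain_cons_cons]
    refine ⟨.inl ((edge_adj _ _ _ _).mpr ⟨.inl ⟨rfl, rfl⟩, ?_⟩), ?_⟩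
    · exact fun hab => (List.nodup_cons.mp h).1 (hab ▸ List.mem_cons_self)
    · exact (isChain_chainGraph (List.nodup_cons.mp h).2).imp fun _ _ => Or.inr

lemma IsAcyclic.sup_edge_of_notMem_support {H : SimpleGraph V} (hH : H.IsAcyclic) {a b : V}
    (ha : a ∉ H.support) (hab : a ≠ b) : (H ⊔ edge a b).IsAcyclic :=
  hH.sup_edge_of_not_reachable fun h => ha (mem_support_of_reachable hab h)

lemma IsAcyclic.chainGraph_sup {H : SimpleGraph V} (hH : H.IsAcyclic) :
    ∀ {l : List V}, l.Nodup → (∀ v ∈ l, v ∉ H.support) → (chainGraph l ⊔ H).IsAcyclic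
  | [], _, _ | [_], _, _ => by simpa [chainGraph] using hH
  | a :: b :: l, hl, hdisj => by
    obtain ⟨ha, hl⟩ := List.nodup_cons.mp hl
    have ih := hH.chainGraph_sup hl fun v hv => hdisj v (List.mem_cons_of_mem a hv)
    have ha' : a ∉ (chainGraph (b :: l) ⊔ H).support := by
      rintro ⟨w, hw | hw⟩
      · exact ha (support_chainGraph_subset _ ⟨w, hw⟩)
      · exact hdisj a List.mem_cons_self ⟨w, hw⟩
    have hab : a ≠ b := fun h => ha (h ▸ List.mem_cons_self)
    simpa only [chainGraph, sup_comm, sup_left_comm, sup_assoc] using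
      ih.sup_edge_of_notMem_support ha' hab

lemma support_pathForest_subset : ∀ L : List (List V), (pathForest L).support ⊆ {v | v ∈ L.flatten}
  | [] => by simp [pathForest]
  | l :: L => by
    rintro v ⟨w, hw | hw⟩
    · exact List.mem_flatten_of_mem List.mem_cons_self (support_chainGraph_subset l ⟨w, hw⟩)
    · exact List.mem_flatten.mpr <| (List.mem_flatten.mp (support_pathForest_subset L ⟨w, hw⟩)).imp
        fun _ h => ⟨List.mem_cons_of_mem l h.1, h.2⟩

lemma isAcyclic_pathForest : ∀ {L : List (List V)}, L.flatten.Nodup → (pathForest L).IsAcyclic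
  | [], _ => isAcyclic_bot
  | l :: L, h => by
    rw [List.flatten_cons, List.nodup_append] at h
    exact (isAcyclic_pathForest h.2.1).chainGraph_sup h.1
      fun v hv hvL => h.2.2 v hv v (support_pathForest_subset L hvL) rfl

lemma chainGraph_le_pathForest : ∀ {L : List (List V)} {l : List V}, l ∈ L →
    chainGraph l ≤ pathForest L
  | _ :: _, _, .head _ => le_sup_left
  | _ :: _, _, .tail _ h => le_sup_of_le_right (chainGraph_le_pathForest h)

lemma pathForest_le {G : SimpleGraph V} : ∀ {L : List (List V)}, (∀ l ∈ L, l.IsChain G.Adj) →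
    pathForest L ≤ G
  | [], _ => bot_le
  | l :: _, h => sup_le (chainGraph_le (h l List.mem_cons_self))
      (pathForest_le fun l' hl' => h l' (List.mem_cons_of_mem l hl'))

end SimpleGraph

open SimpleGraph

lemma IsPathPartition.mono {G H : SimpleGraph V} (h : H ≤ G) {L : List (List V)}
    (hL : IsPathPartition H L) : IsPathPartition G L :=
  ⟨fun l hl => ⟨(hL.1 l hl).1, (hL.1 l hl).2.1, (hL.1 l hl).2.2.imp fun _ _ hab => h hab⟩, hL.2⟩

lemma IsPathPartition.pathForest {G : SimpleGraph V} {L : List (List V)}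
    (hL : IsPathPartition G L) : IsPathPartition (SimpleGraph.pathForest L) L :=
  ⟨fun l hl => ⟨(hL.1 l hl).1, (hL.1 l hl).2.1,
    (isChain_chainGraph (hL.1 l hl).2.1).imp fun _ _ h => chainGraph_le_pathForest hl h⟩, hL.2⟩

lemma IsPathPartition.pathForest_le {G : SimpleGraph V} {L : List (List V)}
    (hL : IsPathPartition G L) : SimpleGraph.pathForest L ≤ G :=
  SimpleGraph.pathForest_le fun l hl => (hL.1 l hl).2.2

lemma isPathPartition_singletons [Fintype V] (G : SimpleGraph V) :
    IsPathPartition G (Finset.univ.toList.map fun v : V => [v]) := by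
  have hflat : (Finset.univ.toList.map fun v : V => [v]).flatten = Finset.univ.toList :=
    List.flatMap_singleton' _
  refine ⟨fun l hl => ?_, by rw [hflat]; exact Finset.nodup_toList _, by simp [hflat]⟩
  obtain ⟨v, -, rfl⟩ := List.mem_map.mp hl
  exact ⟨List.cons_ne_nil _ _, List.nodup_singleton _, List.isChain_singleton _⟩

lemma ppn_le {G : SimpleGraph V} {L : List (List V)} (hL : IsPathPartition G L) :
    ppn G ≤ L.length :=
  Nat.sInf_le ⟨L, hL, rfl⟩

lemma exists_isPathPartition_length_eq_ppn [Fintype V] (G : SimpleGraph V) :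
    ∃ L, IsPathPartition G L ∧ L.length = ppn G :=
  Nat.sInf_mem (s := {k | ∃ L, IsPathPartition G L ∧ L.length = k})
    ⟨_, _, isPathPartition_singletons G, rfl⟩

lemma ppn_anti [Fintype V] {G H : SimpleGraph V} (h : H ≤ G) : ppn G ≤ ppn H := by
  obtain ⟨L, hL, hlen⟩ := exists_isPathPartition_length_eq_ppn H
  exact hlen ▸ ppn_le (hL.mono h)

theorem exists_spanningTree_ppn_eq_general [Fintype V] (G : SimpleGraph V)
    (hG : G.Connected) : ∃ T : SimpleGraph V, T ≤ G ∧ T.IsTree ∧ ppn T = ppn G := by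
  obtain ⟨L, hL, hlen⟩ := exists_isPathPartition_length_eq_ppn G
  obtain ⟨T, hLT, hTG, hT⟩ :=
    hG.exists_isTree_le_of_le_of_isAcyclic hL.pathForest_le (isAcyclic_pathForest hL.2.1)
  exact ⟨T, hTG, hT, le_antisymm (hlen ▸ ppn_le (hL.pathForest.mono hLT)) (ppn_anti hTG)⟩

theorem exists_spanningTree_ppn_eq [Fintype V] [Nonempty V] (G : SimpleGraph V)
    (hG : G.Connected) : ∃ T : SimpleGraph V, T ≤ G ∧ T.IsTree ∧ ppn T = ppn G :=
  exists_spanningTree_ppn_eq_general G hG
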